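/- arXiv:2506.09126 — 3 statements merged into one kernel-verified Lean document; each statement's English description precedes it below -/
import Mathlib

section
/- Define r(l₁,l₂,n₁,n₂) := (π²/2)·[(l₁−n₁)² + (l₂−n₂)² + 4i(l₁n₂ − l₂n₁)] for integers l₁,l₂,n₁,n₂, and a(l₁,l₂,n₁,n₂) := −conj(r)/r whenever r ≠ 0. Then there exist integer tuples (l₁,l₂,n₁,n₂) and (l₁',l₂',n₁',n₂') with all relevant r's nonzero such that a(l₁,l₂,n₁,n₂)·a(l₁',l₂',n₁',n₂') ≠ a(l₁,l₂,n₁',n₂')·a(l₁',l₂',n₁,n₂); consequently a cannot be written in separable form a(l₁,l₂,n₁,n₂) = conj(b(l₁,l₂))·b(n₁,n₂) for any function b : ℤ² → U(1). -/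
open Complex

noncomputable section

def rCoeff (L N : ℤ × ℤ) : ℂ :=
  ((Real.pi ^ 2 / 2 : ℝ) : ℂ) *
    (((L.1 - N.1 : ℤ) : ℂ) ^ 2 + ((L.2 - N.2 : ℤ) : ℂ) ^ 2 +
      4 * I * ((L.1 * N.2 - L.2 * N.1 : ℤ) : ℂ))

def aCoeff (L N : ℤ × ℤ) : ℂ := -(starRingEnd ℂ (rCoeff L N)) / rCoeff L N

/-!
Since `r(L, N)` is a positive multiple of `|L - N|² + 4i (L × N)`, the unimodular number
`a(L, N) = -conj r / r` equals `-1` exactly when `r` is real, i.e. when `L` and `N` are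
collinear with the origin. Taking `L = (0,0)`, `L' = (1,0)`, `N = (2,0)`, `N' = (0,1)`,
three of the four coefficients in `a(L,N) a(L',N') = a(L,N') a(L',N)` are `-1` while
`a(L',N') ≠ -1`, so the identity fails. A separable `a` would satisfy it, both sides
being `conj (b L) conj (b L') b N b N'`.
-/

lemma rCoeff_re (L N : ℤ × ℤ) :
    (rCoeff L N).re =
      Real.pi ^ 2 / 2 * (((L.1 - N.1 : ℤ) : ℝ) ^ 2 + ((L.2 - N.2 : ℤ) : ℝ) ^ 2) := by
  simp [rCoeff, pow_two]

lemma rCoeff_im (L N : ℤ × ℤ) :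
    (rCoeff L N).im = 2 * Real.pi ^ 2 * ((L.1 * N.2 - L.2 * N.1 : ℤ) : ℝ) := by
  simp only [rCoeff, pow_two, ofReal_div, ofReal_mul, ofReal_ofNat, Int.cast_sub, Int.cast_mul,
    mul_im, div_ofNat_re, mul_re, ofReal_re, ofReal_im, mul_zero, sub_zero, add_im, sub_re,
    intCast_re, sub_im, intCast_im, sub_self, zero_mul, add_zero, re_ofNat, I_re, im_ofNat, I_im,
    mul_one, zero_add, div_ofNat_im, zero_div, add_re]
  ring

lemma rCoeff_eq_zero_iff {L N : ℤ × ℤ} : rCoeff L N = 0 ↔ L = N := by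
  constructor
  · intro h
    have hre := congrArg Complex.re h
    rw [rCoeff_re, zero_re, mul_eq_zero, or_iff_right (by positivity)] at hre
    have h₁ : ((L.1 - N.1 : ℤ) : ℝ) = 0 := by nlinarith [sq_nonneg ((L.2 - N.2 : ℤ) : ℝ)]
    have h₂ : ((L.2 - N.2 : ℤ) : ℝ) = 0 := by nlinarith [sq_nonneg ((L.1 - N.1 : ℤ) : ℝ)]
    norm_cast at h₁ h₂
    exact Prod.ext (by omega) (by omega)
  · rintro rfl
    simp [rCoeff, mul_comm]

lemma aCoeff_eq_neg_one_iff {L N : ℤ × ℤ} (hr : rCoeff L N ≠ 0) :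
    aCoeff L N = -1 ↔ L.1 * N.2 = L.2 * N.1 := by
  rw [aCoeff, neg_div, neg_inj, div_eq_one_iff_eq hr, conj_eq_iff_im, rCoeff_im]
  have : (2 * Real.pi ^ 2) ≠ 0 := by positivity
  simp only [this, mul_eq_zero, false_or, Int.cast_eq_zero, sub_eq_zero]

/-- There exist integer tuples with all relevant `r`'s nonzero for which the consistency
identity `a(L,N)·a(L',N') = a(L,N')·a(L',N)` fails; consequently `a` cannot be written in
separable form `a(L,N) = conj(b(L))·b(N)` for any `b : ℤ² → U(1)`. -/
theorem aCoeff_not_separable :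
    (∃ L N L' N' : ℤ × ℤ,
      rCoeff L N ≠ 0 ∧ rCoeff L' N' ≠ 0 ∧ rCoeff L N' ≠ 0 ∧ rCoeff L' N ≠ 0 ∧
      aCoeff L N * aCoeff L' N' ≠ aCoeff L N' * aCoeff L' N) ∧
    ∀ b : ℤ × ℤ → ℂ, (∀ L, ‖b L‖ = 1) →
      ¬ (∀ L N : ℤ × ℤ, rCoeff L N ≠ 0 → aCoeff L N = starRingEnd ℂ (b L) * b N) := by
  have hr₁ : rCoeff (0, 0) (2, 0) ≠ 0 := by simp [rCoeff_eq_zero_iff]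
  have hr₂ : rCoeff (1, 0) (0, 1) ≠ 0 := by simp [rCoeff_eq_zero_iff]
  have hr₃ : rCoeff (0, 0) (0, 1) ≠ 0 := by simp [rCoeff_eq_zero_iff]
  have hr₄ : rCoeff (1, 0) (2, 0) ≠ 0 := by simp [rCoeff_eq_zero_iff]
  have ha₂ : aCoeff (1, 0) (0, 1) ≠ -1 := by simp [aCoeff_eq_neg_one_iff hr₂]
  have key : aCoeff (0, 0) (2, 0) * aCoeff (1, 0) (0, 1) ≠
      aCoeff (0, 0) (0, 1) * aCoeff (1, 0) (2, 0) := by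
    rw [(aCoeff_eq_neg_one_iff hr₁).2 rfl, (aCoeff_eq_neg_one_iff hr₃).2 rfl,
      (aCoeff_eq_neg_one_iff hr₄).2 rfl]
    contrapose! ha₂
    linear_combination -ha₂
  refine ⟨⟨_, _, _, _, hr₁, hr₂, hr₃, hr₄, key⟩, fun b _ hsep ↦ key ?_⟩
  rw [hsep _ _ hr₁, hsep _ _ hr₂, hsep _ _ hr₃, hsep _ _ hr₄]
  ring

end
end

section
/- Let m, m' > 0 and let φ, ψ be eigenspinors of a formally self-adjoint operator D on a complex inner product space with Dφ = m'φ and Dψ = mψ, and let Γ be a self-adjoint involution anti-commuting with D, and L an operator commuting with Γ. Then ⟨φ, [D,L] Γψ⟩ = (m+m')·⟨Γφ, Lψ⟩, and moreover ⟨Γφ, Lψ⟩ = ⟨φ⁺, Lψ⁺⟩ − ⟨φ⁻, Lψ⁻⟩ where χ^± := (1/2)(1 ± Γ)χ. -/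
open Complex

local notation "⟪" x ", " y "⟫" => @inner ℂ _ _ x y

/-- Let `D` be symmetric, `Γ` a self-adjoint involution anti-commuting with `D`, and `L`
an operator commuting with `Γ`, on a complex inner product space.  For eigenvectors
`Dφ = m'φ`, `Dψ = mψ` with `m, m' > 0`:
`⟨φ, [D,L] Γψ⟩ = (m+m')·⟨Γφ, Lψ⟩`, and
`⟨Γφ, Lψ⟩ = ⟨φ⁺, Lψ⁺⟩ − ⟨φ⁻, Lψ⁻⟩` where `χ^± = (1/2)(1±Γ)χ`. -/
theorem commutator_chirality_matrix_elements {V : Type*} [NormedAddCommGroup V]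
    [InnerProductSpace ℂ V] (D L Γ : V →ₗ[ℂ] V) (m m' : ℝ) (hm : 0 < m) (hm' : 0 < m')
    (φ ψ : V) (hφ : D φ = (m' : ℂ) • φ) (hψ : D ψ = (m : ℂ) • ψ)
    (hDsym : ∀ x y : V, ⟪D x, y⟫ = ⟪x, D y⟫)
    (hΓ2 : ∀ x : V, Γ (Γ x) = x)
    (hΓsa : ∀ x y : V, ⟪Γ x, y⟫ = ⟪x, Γ y⟫)
    (hanti : ∀ x : V, D (Γ x) = -Γ (D x))
    (hcomm : ∀ x : V, L (Γ x) = Γ (L x)) :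
    ⟪φ, (D ∘ₗ L - L ∘ₗ D) (Γ ψ)⟫ = ((m + m' : ℝ) : ℂ) * ⟪Γ φ, L ψ⟫ ∧
    ⟪Γ φ, L ψ⟫ =
      ⟪(1 / 2 : ℂ) • (φ + Γ φ), L ((1 / 2 : ℂ) • (ψ + Γ ψ))⟫ -
      ⟪(1 / 2 : ℂ) • (φ - Γ φ), L ((1 / 2 : ℂ) • (ψ - Γ ψ))⟫ := by
  have hkey : ⟪φ, Γ (L ψ)⟫ = ⟪Γ φ, L ψ⟫ := (hΓsa φ (L ψ)).symm
  constructor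
  · have h1 : ⟪φ, D (L (Γ ψ))⟫ = ((m' : ℂ)) * ⟪Γ φ, L ψ⟫ := by
      rw [← hDsym, hφ, inner_smul_left, hcomm, hkey]
      simp
    have h2 : ⟪φ, L (D (Γ ψ))⟫ = -((m : ℂ)) * ⟪Γ φ, L ψ⟫ := by
      rw [hanti, hψ]
      simp only [map_neg, map_smul, inner_neg_right, inner_smul_right, hcomm, hkey]
      ring
    simp only [LinearMap.sub_apply, LinearMap.comp_apply, inner_sub_right, h1, h2]
    push_cast
    ring
  · have h3 : ⟪Γ φ, Γ (L ψ)⟫ = ⟪φ, L ψ⟫ := by rw [hΓsa, hΓ2]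
    rw [map_smul, map_smul, map_add, map_sub, hcomm,
      inner_smul_left, inner_smul_right, inner_smul_left, inner_smul_right,
      inner_add_left, inner_add_right, inner_add_right,
      inner_sub_left, inner_sub_right, inner_sub_right,
      hkey, h3]
    ring_nf
    simp only [map_div₀, map_one, map_ofNat]; ring
end

section
/- On the sphere S², combining the spinor decomposition ψ_{l,n} = √(2π(l−n)/l)·Y⁰_{l−1/2,n+1/2}·ψ_{1/2,−1/2} + √(2π(l+n)/l)·Y⁰_{l−1/2,n−1/2}·ψ_{1/2,1/2} with the matrix element formulas ⟨Γ·Y⁰_{l,n}ψ_{1/2,±1/2}, 𝔏_{X_h}ψ_{1/2,±1/2}⟩_{L²} = (i/16π)[l(l+1) ∓ 2n]·⟨Y⁰_{l,n}, h⟩_{L²} and ⟨Γ·Y⁰_{l,n}ψ_{1/2,±1/2}, 𝔏_{X_h}ψ_{1/2,∓1/2}⟩_{L²} = −(i/8π)√((l∓n)(l±n+1))·⟨Y⁰_{l,n±1}, h⟩_{L²}, one obtains ⟨ψ⁺_{l,n}, 𝔏_{X_h}ψ⁺_{1/2,1/2}⟩ − ⟨ψ⁻_{l,n}, 𝔏_{X_h}ψ⁻_{1/2,1/2}⟩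 = (i/8)·√((l+n)/(2πl))·(l − 3/2)(l − 1/2)·⟨Y⁰_{l−1/2,n−1/2}, h⟩_{L²}. -/
open Complex Real

local notation "⟪" x ", " y "⟫" => @inner ℂ _ _ x y

/-!
By the chirality identity the left-hand side is `⟨Γψ_{l,n}, 𝔏ψ_{1/2,1/2}⟩`. Expanding `ψ_{l,n}`
gives a diagonal element of `Y⁰_{l-1/2,n-1/2}ψ_{1/2,1/2}` and a mixed element of
`Y⁰_{l-1/2,n+1/2}ψ_{1/2,-1/2}`, both multiples of `⟨Y⁰_{l-1/2,n-1/2}, h⟩`.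
Since `√(2π(l-n)/l)·√((l+n)(l-n)) = (l-n)·√(2π(l+n)/l)`, the two contributions share the factor
`√(2π(l+n)/l) = 2π√((l+n)/(2πl))`, and their coefficients add up to
`(i/16π)[(l-1/2)(l+1/2) - 2(n-1/2) - 2(l-n)] = (i/16π)(l-3/2)(l-1/2)`.
-/

theorem Real.sqrt_mul_mul_sqrt_mul {k d : ℝ} (hk : 0 ≤ k) (hd : 0 ≤ d) (s : ℝ) :
    √(k * d) * √(s * d) = d * √(k * s) := by
  rw [← Real.sqrt_mul (mul_nonneg hk hd), show k * d * (s * d) = d ^ 2 * (k * s) by ring,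
    Real.sqrt_mul (sq_nonneg d), Real.sqrt_sq hd]

theorem Real.sqrt_sq_mul {c : ℝ} (hc : 0 ≤ c) (y : ℝ) : √(c ^ 2 * y) = c * √y := by
  rw [Real.sqrt_mul (sq_nonneg c), Real.sqrt_sq hc]

theorem inner_map_ofReal_smul_add_left {V : Type*} [NormedAddCommGroup V]
    [InnerProductSpace ℂ V] (T : V →ₗ[ℂ] V) (a b : ℝ) (x y z : V) :
    ⟪T ((a : ℂ) • x + (b : ℂ) • y), z⟫ = a * ⟪T x, z⟫ + b * ⟪T y, z⟫ := by
  rw [map_add, map_smul, map_smul, inner_add_left, inner_smul_left, inner_smul_left,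
    conj_ofReal, conj_ofReal]

/-- `M a b` is multiplication by `Y⁰_{a,b}`, `H a b = ⟨Y⁰_{a,b}, h⟩`, `ψp`, `ψm` are the Killing
spinors `ψ_{1/2,±1/2}`, `ψln` is `ψ_{l,n}` and `L` is `𝔏_{X_h}`. -/
theorem sphere_chiral_asymmetry_general {V : Type*} [NormedAddCommGroup V] [InnerProductSpace ℂ V]
    (L Γ : V →ₗ[ℂ] V) (M : ℝ → ℝ → V →ₗ[ℂ] V) (H : ℝ → ℝ → ℂ)
    (ψp ψm ψln : V) (l n : ℝ)
    (hl : 0 < l) (hn₂ : n ≤ l)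
    (hchir : ∀ φ χ : V,
      ⟪(1 / 2 : ℂ) • (φ + Γ φ), L ((1 / 2 : ℂ) • (χ + Γ χ))⟫ -
        ⟪(1 / 2 : ℂ) • (φ - Γ φ), L ((1 / 2 : ℂ) • (χ - Γ χ))⟫ = ⟪Γ φ, L χ⟫)
    (hdec : ψln =
      ((Real.sqrt (2 * Real.pi * (l - n) / l) : ℝ) : ℂ) • M (l - 1/2) (n + 1/2) ψm +
      ((Real.sqrt (2 * Real.pi * (l + n) / l) : ℝ) : ℂ) • M (l - 1/2) (n - 1/2) ψp)
    (hmePP : ∀ a b : ℝ, ⟪Γ (M a b ψp), L ψp⟫ =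
      I / (16 * (Real.pi : ℂ)) * ((a : ℂ) * (a + 1) - 2 * b) * H a b)
    (hmeMP : ∀ a b : ℝ, ⟪Γ (M a b ψm), L ψp⟫ =
      -(I / (8 * (Real.pi : ℂ))) * ((Real.sqrt ((a + b) * (a - b + 1)) : ℝ) : ℂ) * H a (b - 1)) :
    ⟪(1 / 2 : ℂ) • (ψln + Γ ψln), L ((1 / 2 : ℂ) • (ψp + Γ ψp))⟫ -
      ⟪(1 / 2 : ℂ) • (ψln - Γ ψln), L ((1 / 2 : ℂ) • (ψp - Γ ψp))⟫ =
    I / 8 * ((Real.sqrt ((l + n) / (2 * Real.pi * l)) : ℝ) : ℂ) *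
      ((l : ℂ) - 3/2) * ((l : ℂ) - 1/2) * H (l - 1/2) (n - 1/2) := by
  have hmixed : ⟪Γ (M (l - 1/2) (n + 1/2) ψm), L ψp⟫ =
      -(I / (8 * (π : ℂ))) * (√((l + n) * (l - n)) : ℂ) * H (l - 1/2) (n - 1/2) := by
    rw [hmeMP, show l - 1/2 + (n + 1/2) = l + n by ring,
      show l - 1/2 - (n + 1/2) + 1 = l - n by ring, show n + 1/2 - 1 = n - 1/2 by ring]
  have hcoeff :
      √(2 * π * (l - n) / l) * √((l + n) * (l - n)) = (l - n) * √(2 * π * (l + n) / l) := by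
    rw [show 2 * π * (l - n) / l = 2 * π / l * (l - n) by ring,
      show 2 * π * (l + n) / l = 2 * π / l * (l + n) by ring]
    exact Real.sqrt_mul_mul_sqrt_mul (by positivity) (sub_nonneg.2 hn₂) _
  have hasym : ⟪Γ ψln, L ψp⟫ = (√(2 * π * (l + n) / l) : ℂ) * (I / (16 * π)) *
      ((l : ℂ) - 3/2) * ((l : ℂ) - 1/2) * H (l - 1/2) (n - 1/2) := by
    have hcoeffC := congrArg ((↑) : ℝ → ℂ) hcoeff
    rw [hdec, inner_map_ofReal_smul_add_left, hmixed, hmePP]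
    push_cast at hcoeffC ⊢
    linear_combination (-(I / (8 * (π : ℂ))) * H (l - 1/2) (n - 1/2)) * hcoeffC
  have hnormalize : (√(2 * π * (l + n) / l) : ℂ) * (I / (16 * π)) =
      I / 8 * (√((l + n) / (2 * π * l)) : ℂ) := by
    have hsqrt : √(2 * π * (l + n) / l) = 2 * π * √((l + n) / (2 * π * l)) := by
      rw [← Real.sqrt_sq_mul (by positivity)]
      congr 1
      field_simp
    rw [hsqrt]
    push_cast
    field_simp
    ring
  rw [hchir, hasym, hnormalize]

/-- Combination of the spinor decomposition on `S²` with the matrix-element formulas,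
yielding the chiral asymmetry coefficient.

`V` is the (L²) space of spinors on `S²` with its complex inner product; `Γ` is the
chirality operator, with chiral projections `χ^± = (1/2)(1±Γ)χ` and the identity
`⟨Γφ, Lψ⟩ = ⟨φ⁺, Lψ⁺⟩ − ⟨φ⁻, Lψ⁻⟩` for the operator `L = 𝔏_{X_h}`; `M a b` is the
operator of multiplication by the scalar spherical harmonic `Y⁰_{a,b}`; `ψp`, `ψm` are
the Killing spinors `ψ_{1/2,±1/2}`; `ψln` is the eigenspinor `ψ_{l,n}`; and
`H a b = ⟨Y⁰_{a,b}, h⟩_{L²}`.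

Hypotheses: the decomposition
`ψ_{l,n} = √(2π(l−n)/l)·Y⁰_{l−1/2,n+1/2}·ψ_{1/2,−1/2} + √(2π(l+n)/l)·Y⁰_{l−1/2,n−1/2}·ψ_{1/2,1/2}`
and the matrix-element formulas
`⟨Γ·Y⁰_{a,b}ψ_{1/2,±1/2}, 𝔏_{X_h}ψ_{1/2,±1/2}⟩ = (i/16π)[a(a+1) ∓ 2b]·⟨Y⁰_{a,b}, h⟩`,
`⟨Γ·Y⁰_{a,b}ψ_{1/2,±1/2}, 𝔏_{X_h}ψ_{1/2,∓1/2}⟩ = −(i/8π)√((a∓b)(a±b+1))·⟨Y⁰_{a,b±1}, h⟩`.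

Conclusion:
`⟨ψ⁺_{l,n}, 𝔏ψ⁺_{1/2,1/2}⟩ − ⟨ψ⁻_{l,n}, 𝔏ψ⁻_{1/2,1/2}⟩
  = (i/8)·√((l+n)/(2πl))·(l−3/2)(l−1/2)·⟨Y⁰_{l−1/2,n−1/2}, h⟩`. -/
theorem sphere_chiral_asymmetry {V : Type*} [NormedAddCommGroup V] [InnerProductSpace ℂ V]
    (L Γ : V →ₗ[ℂ] V) (M : ℝ → ℝ → V →ₗ[ℂ] V) (H : ℝ → ℝ → ℂ)
    (ψp ψm ψln : V) (l n : ℝ)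
    (hl : 0 < l) (hn₁ : -l ≤ n) (hn₂ : n ≤ l)
    (hchir : ∀ φ χ : V,
      ⟪(1 / 2 : ℂ) • (φ + Γ φ), L ((1 / 2 : ℂ) • (χ + Γ χ))⟫ -
        ⟪(1 / 2 : ℂ) • (φ - Γ φ), L ((1 / 2 : ℂ) • (χ - Γ χ))⟫ = ⟪Γ φ, L χ⟫)
    (hdec : ψln =
      ((Real.sqrt (2 * Real.pi * (l - n) / l) : ℝ) : ℂ) • M (l - 1/2) (n + 1/2) ψm +
      ((Real.sqrt (2 * Real.pi * (l + n) / l) : ℝ) : ℂ) • M (l - 1/2) (n - 1/2) ψp)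
    (hmePP : ∀ a b : ℝ, ⟪Γ (M a b ψp), L ψp⟫ =
      I / (16 * (Real.pi : ℂ)) * ((a : ℂ) * (a + 1) - 2 * b) * H a b)
    (hmeMM : ∀ a b : ℝ, ⟪Γ (M a b ψm), L ψm⟫ =
      I / (16 * (Real.pi : ℂ)) * ((a : ℂ) * (a + 1) + 2 * b) * H a b)
    (hmePM : ∀ a b : ℝ, ⟪Γ (M a b ψp), L ψm⟫ =
      -(I / (8 * (Real.pi : ℂ))) * ((Real.sqrt ((a - b) * (a + b + 1)) : ℝ) : ℂ) * H a (b + 1))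
    (hmeMP : ∀ a b : ℝ, ⟪Γ (M a b ψm), L ψp⟫ =
      -(I / (8 * (Real.pi : ℂ))) * ((Real.sqrt ((a + b) * (a - b + 1)) : ℝ) : ℂ) * H a (b - 1)) :
    ⟪(1 / 2 : ℂ) • (ψln + Γ ψln), L ((1 / 2 : ℂ) • (ψp + Γ ψp))⟫ -
      ⟪(1 / 2 : ℂ) • (ψln - Γ ψln), L ((1 / 2 : ℂ) • (ψp - Γ ψp))⟫ =
    I / 8 * ((Real.sqrt ((l + n) / (2 * Real.pi * l)) : ℝ) : ℂ) *
      ((l : ℂ) - 3/2) * ((l : ℂ) - 1/2) * H (l - 1/2) (n - 1/2) :=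
  sphere_chiral_asymmetry_general L Γ M H ψp ψm ψln l n hl hn₂ hchir hdec hmePP hmeMP
end
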